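/- arXiv:2109.07647 — 7 statements merged into one kernel-verified Lean document; each statement's English description precedes it below -/
import Mathlib

section
/- Let A be an n×n real symmetric matrix with all entries bounded in magnitude by 1 (‖A‖_∞ ≤ 1). Let V_o be the n×r matrix whose columns are orthonormal eigenvectors of A corresponding to eigenvalues of magnitude at least εn. Then every row V_{o,i} of V_o satisfies ‖V_{o,i}‖₂² ≤ 1/(ε²n). -/
open Matrix Finset

/-- **Incoherence of outlying eigenvectors.**
If `A` is an `n × n` real symmetric matrix with all entries bounded by `1` in magnitude,
and `V` is an `n × r` matrix whose columns are orthonormal eigenvectors of `A`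
for eigenvalues `lam j` with `|lam j| ≥ ε n`, then every row of `V` has squared
Euclidean norm at most `1 / (ε² n)`. -/
theorem row_norm_bound_uniform
    (n r : ℕ) (A : Matrix (Fin n) (Fin n) ℝ) (ε : ℝ)
    (hA : A.IsHermitian)
    (hbound : ∀ i j, |A i j| ≤ 1)
    (hε : ε ∈ Set.Ioo (0 : ℝ) 1)
    (V : Matrix (Fin n) (Fin r) ℝ) (lam : Fin r → ℝ)
    (horth : Vᵀ * V = 1)
    (heig : ∀ j : Fin r, A.mulVec (fun i => V i j) = fun i => lam j * V i j)
    (hlam : ∀ j : Fin r, ε * n ≤ |lam j|) :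
    ∀ i : Fin n, ∑ j : Fin r, (V i j) ^ 2 ≤ 1 / (ε ^ 2 * n) := by
  intro i
  have hn : 0 < (n : ℝ) := by
    have : n ≠ 0 := fun h => (h ▸ i).elim0
    exact_mod_cast Nat.pos_of_ne_zero this
  obtain ⟨hε0, hε1⟩ := hε
  -- the i-th column of A
  set w : Fin n → ℝ := fun k => A k i with hw
  set c : Fin r → ℝ := fun j => ∑ k, V k j * w k with hc
  -- orthonormality entrywise
  have horth' : ∀ j j' : Fin r, (∑ k, V k j * V k j') = if j = j' then 1 else 0 := by
    intro j j'
    have h := congrFun (congrFun horth j) j'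
    simpa [Matrix.mul_apply, Matrix.transpose_apply, Matrix.one_apply] using h
  -- Bessel's inequality
  have bessel : ∑ j, (c j) ^ 2 ≤ ∑ k, (w k) ^ 2 := by
    have h0 : (0 : ℝ) ≤ ∑ k, (w k - ∑ j, c j * V k j) ^ 2 :=
      Finset.sum_nonneg fun _ _ => sq_nonneg _
    have e2 : ∑ k, w k * ∑ j, c j * V k j = ∑ j, (c j) ^ 2 := by
      have : ∀ k, w k * ∑ j, c j * V k j = ∑ j, c j * (V k j * w k) := by
        intro k; rw [Finset.mul_sum]; apply Finset.sum_congr rfl; intro j _; ring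
      rw [Finset.sum_congr rfl fun k _ => this k, Finset.sum_comm]
      apply Finset.sum_congr rfl; intro j _
      rw [← Finset.mul_sum, hc]; ring
    have e3 : ∑ k, (∑ j, c j * V k j) ^ 2 = ∑ j, (c j) ^ 2 := by
      have : ∀ k, (∑ j, c j * V k j) ^ 2
          = ∑ j, ∑ j', (c j * c j') * (V k j * V k j') := by
        intro k
        rw [sq, Finset.sum_mul_sum]
        apply Finset.sum_congr rfl; intro j _
        apply Finset.sum_congr rfl; intro j' _; ring
      rw [Finset.sum_congr rfl fun k _ => this k, Finset.sum_comm]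
      apply Finset.sum_congr rfl; intro j _
      rw [Finset.sum_comm]
      have : ∀ j', ∑ k, (c j * c j') * (V k j * V k j')
          = (c j * c j') * (if j = j' then 1 else 0) := by
        intro j'
        rw [← Finset.mul_sum, horth' j j']
      rw [Finset.sum_congr rfl fun j' _ => this j']
      simp [sq]
    have hexp : ∑ k, (w k - ∑ j, c j * V k j) ^ 2
        = ∑ k, (w k) ^ 2 - ∑ j, (c j) ^ 2 := by
      have : ∀ k, (w k - ∑ j, c j * V k j) ^ 2
          = (w k) ^ 2 - 2 * (w k * ∑ j, c j * V k j) + (∑ j, c j * V k j) ^ 2 := by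
        intro k; ring
      rw [Finset.sum_congr rfl fun k _ => this k, Finset.sum_add_distrib,
        Finset.sum_sub_distrib, ← Finset.mul_sum, e2, e3]
      ring
    linarith [hexp ▸ h0]
  -- c j = lam j * V i j
  have hsymm : ∀ k l, A k l = A l k := by
    intro k l
    have h := congrFun (congrFun hA.symm k) l
    simpa [Matrix.conjTranspose_apply] using h
  have hcj : ∀ j, c j = lam j * V i j := by
    intro j
    have h := congrFun (heig j) i
    rw [Matrix.mulVec, dotProduct] at h
    rw [hc]
    calc ∑ k, V k j * w k = ∑ k, A i k * V k j := by
          apply Finset.sum_congr rfl; intro k _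
          show V k j * A k i = A i k * V k j
          rw [hsymm k i]; ring
      _ = lam j * V i j := h
  -- column norm bound
  have hwb : ∑ k, (w k) ^ 2 ≤ (n : ℝ) := by
    calc ∑ k, (w k) ^ 2 ≤ ∑ _k : Fin n, (1 : ℝ) := by
          apply Finset.sum_le_sum
          intro k _
          have hwk : w k = A k i := rfl
          have := hbound k i
          rw [hwk]
          obtain ⟨h1, h2⟩ := abs_le.mp this
          nlinarith
      _ = (n : ℝ) := by simp
  -- eigenvalue lower bound
  have hlow : (ε * n) ^ 2 * ∑ j, (V i j) ^ 2 ≤ ∑ j, (c j) ^ 2 := by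
    rw [Finset.mul_sum]
    apply Finset.sum_le_sum
    intro j _
    rw [hcj j, mul_pow]
    have h1 : (ε * n) ^ 2 ≤ (lam j) ^ 2 := by
      have := hlam j
      have h2 : (0 : ℝ) ≤ ε * n := by positivity
      nlinarith [sq_abs (lam j)]
    nlinarith [sq_nonneg (V i j)]
  have hεn : (0 : ℝ) < ε ^ 2 * n := by positivity
  rw [le_div_iff₀ hεn]
  nlinarith [bessel, hwb, hlow, sq_nonneg ε]
end

section
/- Let A be an n×n real symmetric matrix with ‖A‖_∞ ≤ 1, and let Λ_o be the diagonal matrix of eigenvalues of A of magnitude at least εn, with V_o the matrix of corresponding orthonormal eigenvectors as columns. Then for every i, the weighted row norm satisfies ‖|Λ_o|^{1/2} V_{o,i}‖₂² = Σ_j |λ_j| V_{o,i,j}² ≤ 1/ε. -/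
open Matrix Finset

/-- **Eigenvalue-weighted incoherence of outlying eigenvectors.**
If `A` is an `n × n` real symmetric matrix with entries bounded by `1` in magnitude,
and `V` has orthonormal columns which are eigenvectors of `A` for eigenvalues `lam j`
with `|lam j| ≥ ε n`, then for every row `i`,
`‖|Λ|^{1/2} V_i‖² = ∑ j, |lam j| * (V i j)² ≤ 1 / ε`. -/
theorem weighted_row_norm_bound_uniform
    (n r : ℕ) (A : Matrix (Fin n) (Fin n) ℝ) (ε : ℝ)
    (hA : A.IsHermitian)
    (hbound : ∀ i j, |A i j| ≤ 1)
    (hε : ε ∈ Set.Ioo (0 : ℝ) 1)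
    (V : Matrix (Fin n) (Fin r) ℝ) (lam : Fin r → ℝ)
    (horth : Vᵀ * V = 1)
    (heig : ∀ j : Fin r, A.mulVec (fun i => V i j) = fun i => lam j * V i j)
    (hlam : ∀ j : Fin r, ε * n ≤ |lam j|) :
    ∀ i : Fin n, ∑ j : Fin r, |lam j| * (V i j) ^ 2 ≤ 1 / ε := by
  intro i
  obtain ⟨hε0, hε1⟩ := hε
  have hn : 0 < n := i.pos
  have hnpos : (0 : ℝ) < n := by exact_mod_cast hn
  have horth' : ∀ j j' : Fin r, ∑ k, V k j * V k j' = if j = j' then 1 else 0 := by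
    intro j j'
    have := congrFun (congrFun horth j) j'
    simpa [Matrix.mul_apply, Matrix.transpose_apply, Matrix.one_apply] using this
  have heig' : ∀ (j : Fin r) (k : Fin n), ∑ l, A k l * V l j = lam j * V k j := by
    intro j k
    have := congrFun (heig j) k
    simpa [Matrix.mulVec, dotProduct] using this
  have hsym : ∀ k l, A k l = A l k := by
    intro k l
    have := congrFun (congrFun hA k) l
    simpa [Matrix.conjTranspose_apply] using this.symm
  set c : Fin r → ℝ := fun j => lam j * V i j with hc
  have hvy : ∀ j, ∑ k, V k j * A k i = c j := by
    intro j
    show ∑ k, V k j * A k i = lam j * V i j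
    rw [← heig' j i]
    apply Finset.sum_congr rfl
    intro k _
    rw [hsym k i]; ring
  have key : ∑ j, c j ^ 2 ≤ ∑ k, (A k i) ^ 2 := by
    have h0 : (0:ℝ) ≤ ∑ k, (A k i - ∑ j, V k j * c j) ^ 2 :=
      Finset.sum_nonneg fun k _ => sq_nonneg _
    have cross : ∑ k, A k i * (∑ j, V k j * c j) = ∑ j, c j ^ 2 := by
      have h1 : ∀ k, A k i * (∑ j, V k j * c j) = ∑ j, (V k j * A k i) * c j := by
        intro k; rw [Finset.mul_sum]; exact Finset.sum_congr rfl fun j _ => by ring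
      simp_rw [h1]
      rw [Finset.sum_comm]
      apply Finset.sum_congr rfl
      intro j _
      rw [← Finset.sum_mul, hvy, sq]
    have quad : ∑ k, (∑ j, V k j * c j) ^ 2 = ∑ j, c j ^ 2 := by
      have h1 : ∀ k : Fin n, (∑ j, V k j * c j) ^ 2
          = ∑ j, ∑ j', (c j * c j') * (V k j * V k j') := by
        intro k
        rw [sq, Finset.sum_mul_sum]
        exact Finset.sum_congr rfl fun j _ =>
          Finset.sum_congr rfl fun j' _ => by ring
      simp_rw [h1]
      rw [Finset.sum_comm]
      have h2 : ∀ j : Fin r, ∑ k, ∑ j', (c j * c j') * (V k j * V k j')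
          = ∑ j', (c j * c j') * ∑ k, V k j * V k j' := by
        intro j
        rw [Finset.sum_comm]
        exact Finset.sum_congr rfl fun j' _ => by rw [Finset.mul_sum]
      simp_rw [h2, horth']
      apply Finset.sum_congr rfl
      intro j _
      simp [mul_ite, Finset.sum_ite_eq, sq]
    have hexp : ∑ k, (A k i - ∑ j, V k j * c j) ^ 2
        = ∑ k, (A k i) ^ 2 - ∑ j, c j ^ 2 := by
      have h3 : ∀ k : Fin n, (A k i - ∑ j, V k j * c j) ^ 2
          = (A k i) ^ 2 - 2 * (A k i * ∑ j, V k j * c j) + (∑ j, V k j * c j) ^ 2 :=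
        fun k => by ring
      simp_rw [h3]
      rw [Finset.sum_add_distrib, Finset.sum_sub_distrib, quad, ← Finset.mul_sum, cross]
      ring
    rw [hexp] at h0
    linarith
  have hrow : ∑ k, (A k i) ^ 2 ≤ (n : ℝ) := by
    calc ∑ k, (A k i) ^ 2 ≤ ∑ _k : Fin n, (1 : ℝ) :=
          Finset.sum_le_sum fun k _ => by
            have h := hbound k i
            nlinarith [abs_nonneg (A k i), sq_abs (A k i)]
      _ = n := by simp
  have hterm : ∀ j, ε * n * (|lam j| * V i j ^ 2) ≤ c j ^ 2 := by
    intro j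
    have h1 := hlam j
    have h2 : c j ^ 2 = |lam j| ^ 2 * V i j ^ 2 := by
      rw [hc]; rw [mul_pow, sq_abs]
    rw [h2]
    have h3 := mul_le_mul_of_nonneg_right h1 (mul_nonneg (abs_nonneg (lam j)) (sq_nonneg (V i j)))
    nlinarith [h3]
  have hsum : ε * n * ∑ j, |lam j| * V i j ^ 2 ≤ (n : ℝ) := by
    rw [Finset.mul_sum]
    calc ∑ j, ε * n * (|lam j| * V i j ^ 2) ≤ ∑ j, c j ^ 2 :=
          Finset.sum_le_sum fun j _ => hterm j
      _ ≤ ∑ k, (A k i) ^ 2 := key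
      _ ≤ n := hrow
  have hS : ε * (∑ j, |lam j| * V i j ^ 2) ≤ 1 := by
    have h2 : (ε * ∑ j, |lam j| * V i j ^ 2) * n ≤ 1 * n := by
      calc (ε * ∑ j, |lam j| * V i j ^ 2) * n
          = ε * n * ∑ j, |lam j| * V i j ^ 2 := by ring
        _ ≤ n := hsum
        _ = 1 * n := by ring
    exact le_of_mul_le_mul_right h2 hnpos
  rw [le_div_iff₀ hε0]
  linarith
end

section
/- Let A be an n×n real symmetric matrix with ‖A‖_∞ ≤ 1. Let A_o = V_o Λ_o V_oᵀ be the projection of A onto the span of eigenvectors with eigenvalue magnitude at least εn. Then every entry of A_o satisfies |(A_o)_{ij}| ≤ 1/ε. -/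
/-!
Write `W = V Λ`, so `(A_o)ᵢⱼ = ∑ₖ λₖ Vᵢₖ Vⱼₖ`. The eigenvector equations say that the
`i`-th row of `W` is `Aᵢ V`, so by Bessel's inequality its squared norm is at most
`‖Aᵢ‖² ≤ n`. Since `|λₖ| ≥ εn`, AM-GM gives `|λₖ Vᵢₖ Vⱼₖ| ≤ (Wᵢₖ² + Wⱼₖ²) / (2εn)`, and
summing over `k` yields `|(A_o)ᵢⱼ| ≤ n / (εn) = 1 / ε`.
-/

open Matrix Finset

theorem Matrix.vecMul_dotProduct_self_le {m r : Type*} [Fintype m] [Fintype r] [DecidableEq r]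
    {V : Matrix m r ℝ} (hV : Vᵀ * V = 1) (x : m → ℝ) :
    (x ᵥ* V) ⬝ᵥ (x ᵥ* V) ≤ x ⬝ᵥ x := by
  set g := x ᵥ* V
  have hcross : x ⬝ᵥ (V *ᵥ g) = g ⬝ᵥ g := dotProduct_mulVec x V g
  have hgram : (V *ᵥ g) ⬝ᵥ (V *ᵥ g) = g ⬝ᵥ g := by
    rw [dotProduct_mulVec, ← mulVec_transpose, mulVec_mulVec, hV, one_mulVec]
  -- `‖x‖² - ‖Vᵀ x‖² = ‖x - V Vᵀ x‖²`
  have hdefect : 0 ≤ (x - V *ᵥ g) ⬝ᵥ (x - V *ᵥ g) := by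
    simpa using dotProduct_star_self_nonneg (x - V *ᵥ g)
  rw [sub_dotProduct, dotProduct_sub, dotProduct_sub, dotProduct_comm (V *ᵥ g) x,
    hcross, hgram] at hdefect
  linarith

theorem dotProduct_self_le_card_of_abs_le_one {m : Type*} [Fintype m] {x : m → ℝ}
    (hx : ∀ k, |x k| ≤ 1) : x ⬝ᵥ x ≤ Fintype.card m := by
  calc x ⬝ᵥ x = ∑ k, |x k| ^ 2 := by simp [dotProduct, sq]
    _ ≤ ∑ _k : m, (1 : ℝ) := by gcongr with k; exact pow_le_one₀ (abs_nonneg _) (hx k)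
    _ = Fintype.card m := by simp

theorem abs_mul_mul_le_of_le_abs {c l a b : ℝ} (hc : 0 < c) (hl : c ≤ |l|) :
    |l * a * b| ≤ ((l * a) ^ 2 + (l * b) ^ 2) / (2 * c) := by
  rw [le_div_iff₀ (by positivity)]
  calc |l * a * b| * (2 * c) ≤ |l * a * b| * (2 * |l|) := by gcongr
    _ = 2 * |l * a| * |l * b| := by rw [abs_mul, abs_mul, abs_mul]; ring
    _ ≤ |l * a| ^ 2 + |l * b| ^ 2 := two_mul_le_add_sq _ _
    _ = (l * a) ^ 2 + (l * b) ^ 2 := by rw [sq_abs, sq_abs]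

theorem abs_mul_diagonal_mul_transpose_apply_le {m r : Type*} [Fintype r] [DecidableEq r]
    (V : Matrix m r ℝ) (lam : r → ℝ) {c s : ℝ} (hc : 0 < c) (hlam : ∀ k, c ≤ |lam k|)
    (hrow : ∀ i, ∑ k, (lam k * V i k) ^ 2 ≤ s) (i j : m) :
    |(V * diagonal lam * Vᵀ) i j| ≤ s / c := by
  have hentry : (V * diagonal lam * Vᵀ) i j = ∑ k, lam k * V i k * V j k := by
    rw [mul_apply]; simp only [mul_diagonal, transpose_apply]
    exact Finset.sum_congr rfl fun k _ => by ring
  calc |(V * diagonal lam * Vᵀ) i j| ≤ ∑ k, |lam k * V i k * V j k| := by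
        rw [hentry]; exact abs_sum_le_sum_abs _ _
    _ ≤ ∑ k, ((lam k * V i k) ^ 2 + (lam k * V j k) ^ 2) / (2 * c) := by
        gcongr with k; exact abs_mul_mul_le_of_le_abs hc (hlam k)
    _ = (∑ k, (lam k * V i k) ^ 2 + ∑ k, (lam k * V j k) ^ 2) / (2 * c) := by
        rw [← Finset.sum_div, Finset.sum_add_distrib]
    _ ≤ (s + s) / (2 * c) := by gcongr <;> exact hrow _
    _ = s / c := by field_simp; ring

theorem sum_sq_eigenvalue_mul_le {n r : Type*} [Fintype n] [Fintype r] [DecidableEq r]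
    (A : Matrix n n ℝ) (V : Matrix n r ℝ) (lam : r → ℝ) (hV : Vᵀ * V = 1)
    (heig : ∀ k, A *ᵥ (fun i => V i k) = fun i => lam k * V i k) (i : n) :
    ∑ k, (lam k * V i k) ^ 2 ≤ A i ⬝ᵥ A i := by
  have hrow : (fun k => lam k * V i k) = A i ᵥ* V := by
    ext k
    exact (congrFun (heig k) i).symm
  calc ∑ k, (lam k * V i k) ^ 2 = (A i ᵥ* V) ⬝ᵥ (A i ᵥ* V) := by
        rw [← hrow]; simp only [dotProduct, sq]
    _ ≤ A i ⬝ᵥ A i := vecMul_dotProduct_self_le hV _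

theorem outlying_part_entry_bound_general
    (n r : ℕ) (A : Matrix (Fin n) (Fin n) ℝ) (ε : ℝ)
    (hbound : ∀ i j, |A i j| ≤ 1)
    (hε : ε ∈ Set.Ioo (0 : ℝ) 1)
    (V : Matrix (Fin n) (Fin r) ℝ) (lam : Fin r → ℝ)
    (horth : Vᵀ * V = 1)
    (heig : ∀ j : Fin r, A.mulVec (fun i => V i j) = fun i => lam j * V i j)
    (hlam : ∀ j : Fin r, ε * n ≤ |lam j|) :
    ∀ i j : Fin n, |(V * Matrix.diagonal lam * Vᵀ) i j| ≤ 1 / ε := by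
  intro i j
  have hn : (0 : ℝ) < n := by exact_mod_cast i.pos
  have hrow : ∀ i, ∑ k, (lam k * V i k) ^ 2 ≤ n := fun i =>
    (sum_sq_eigenvalue_mul_le A V lam horth heig i).trans <| by
      simpa using dotProduct_self_le_card_of_abs_le_one (hbound i)
  calc |(V * diagonal lam * Vᵀ) i j| ≤ n / (ε * n) :=
        abs_mul_diagonal_mul_transpose_apply_le V lam (mul_pos hε.1 hn) hlam hrow i j
    _ = 1 / ε := by field_simp

/-- **Entrywise bound on the outlying part `A_o = V Λ Vᵀ`.**
If `A` is an `n × n` real symmetric matrix with entries bounded by `1` in magnitude,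
and `V` has orthonormal columns which are eigenvectors of `A` for eigenvalues `lam j`
with `|lam j| ≥ ε n`, then every entry of `A_o = V * diagonal lam * Vᵀ` has magnitude
at most `1 / ε`. -/
theorem outlying_part_entry_bound
    (n r : ℕ) (A : Matrix (Fin n) (Fin n) ℝ) (ε : ℝ)
    (hA : A.IsHermitian)
    (hbound : ∀ i j, |A i j| ≤ 1)
    (hε : ε ∈ Set.Ioo (0 : ℝ) 1)
    (V : Matrix (Fin n) (Fin r) ℝ) (lam : Fin r → ℝ)
    (horth : Vᵀ * V = 1)
    (heig : ∀ j : Fin r, A.mulVec (fun i => V i j) = fun i => lam j * V i j)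
    (hlam : ∀ j : Fin r, ε * n ≤ |lam j|) :
    ∀ i j : Fin n, |(V * Matrix.diagonal lam * Vᵀ) i j| ≤ 1 / ε :=
  outlying_part_entry_bound_general n r A ε hbound hε V lam horth heig hlam
end

section
/- Let A be an n×n real symmetric matrix with ‖A‖_∞ ≤ 1, and let A_m be the projection of A onto the span of eigenvectors with eigenvalue magnitude less than εn. Then ‖A_m‖_∞ ≤ 1 + 1/ε. -/
/-!
The outlying part is `A_o = V Λ Vᵀ = W Λ⁻¹ Wᵀ` with `W = V Λ = A V`. By Bessel's inequality for the
orthonormal columns of `V`, each row of `W = A V` has squared norm at most that of the corresponding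
row of `A`, i.e. at most `n`. Hence, by AM-GM and `|λ| ≥ εn`,
`|(A_o)ᵢⱼ| ≤ ∑ₖ |Wᵢₖ Wⱼₖ| / |λₖ| ≤ (‖Wᵢ‖² + ‖Wⱼ‖²) / (2εn) ≤ 1/ε`,
and `|(A_m)ᵢⱼ| ≤ |Aᵢⱼ| + |(A_o)ᵢⱼ| ≤ 1 + 1/ε`.
-/

open Matrix Finset

namespace Matrix

theorem mul_eq_mul_diagonal_of_mulVec_col_eq {R : Type*} [CommSemiring R] {m k : Type*}
    [Fintype m] [Fintype k] [DecidableEq k] {A : Matrix m m R} {V : Matrix m k R} {lam : k → R}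
    (heig : ∀ j, A *ᵥ (fun i => V i j) = fun i => lam j * V i j) :
    A * V = V * diagonal lam := by
  ext p j
  rw [mul_diagonal, mul_comm]
  simpa [mulVec, dotProduct, mul_apply] using congrFun (heig j) p

variable {R : Type*} [Field R] [LinearOrder R] [IsStrictOrderedRing R] {m k : Type*} [Fintype k]

/-- Bessel's inequality for a matrix with orthonormal columns. -/
theorem vecMul_dotProduct_self_le_s3 [Fintype m] [DecidableEq k] {V : Matrix m k R}
    (hV : Vᵀ * V = 1) (a : m → R) : (a ᵥ* V) ⬝ᵥ (a ᵥ* V) ≤ a ⬝ᵥ a := by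
  set y := a ᵥ* V
  have hproj : (V *ᵥ y) ᵥ* V = y := by
    rw [← vecMul_transpose, vecMul_vecMul, hV, vecMul_one]
  have hcross : a ⬝ᵥ (V *ᵥ y) = y ⬝ᵥ y := dotProduct_mulVec a V y
  have hnorm : (V *ᵥ y) ⬝ᵥ (V *ᵥ y) = y ⬝ᵥ y := by
    rw [dotProduct_mulVec, hproj]
  have hres : 0 ≤ (a - V *ᵥ y) ⬝ᵥ (a - V *ᵥ y) :=
    sum_nonneg fun q _ => mul_self_nonneg _
  rw [sub_dotProduct, dotProduct_sub, dotProduct_sub, dotProduct_comm (V *ᵥ y) a, hcross,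
    hnorm] at hres
  linarith

theorem dotProduct_self_le_card [Fintype m] {v : m → R} (hv : ∀ i, |v i| ≤ 1) :
    v ⬝ᵥ v ≤ Fintype.card m := by
  calc v ⬝ᵥ v ≤ ∑ _i : m, (1 : R) :=
        sum_le_sum fun i _ => by
          simpa only [abs_mul_abs_self, mul_one] using
            mul_le_mul (hv i) (hv i) (abs_nonneg _) zero_le_one
    _ = Fintype.card m := by simp

theorem abs_mul_diagonal_mul_transpose_apply_le [DecidableEq k] {V : Matrix m k R}
    {lam : k → R} {c M : R} (hc : 0 < c) (hlam : ∀ j, c ≤ |lam j|)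
    (hrow : ∀ p, (V * diagonal lam) p ⬝ᵥ (V * diagonal lam) p ≤ M) (i j : m) :
    |(V * diagonal lam * Vᵀ) i j| ≤ M / c := by
  have hterm : ∀ l, |V i l * lam l * V j l|
      ≤ ((V i l * lam l) ^ 2 + (V j l * lam l) ^ 2) / (2 * c) := fun l => by
    have hamgm := two_mul_le_add_sq |V i l * lam l| |V j l * lam l|
    rw [sq_abs, sq_abs] at hamgm
    have hscale : |V i l * lam l * V j l| * c ≤ |V i l * lam l| * |V j l * lam l| :=
      calc |V i l * lam l * V j l| * c ≤ |V i l * lam l * V j l| * |lam l| := by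
            gcongr; exact hlam l
        _ = |V i l * lam l| * |V j l * lam l| := by rw [← abs_mul, ← abs_mul]; ring_nf
    rw [le_div_iff₀ (by positivity)]
    linarith
  calc |(V * diagonal lam * Vᵀ) i j| = |∑ l, V i l * lam l * V j l| := by
        rw [mul_apply]
        simp only [mul_diagonal, transpose_apply]
    _ ≤ ∑ l, |V i l * lam l * V j l| := abs_sum_le_sum_abs _ _
    _ ≤ ∑ l, ((V i l * lam l) ^ 2 + (V j l * lam l) ^ 2) / (2 * c) :=
        sum_le_sum fun l _ => hterm l
    _ = ((V * diagonal lam) i ⬝ᵥ (V * diagonal lam) i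
          + (V * diagonal lam) j ⬝ᵥ (V * diagonal lam) j) / (2 * c) := by
        simp only [dotProduct, mul_diagonal, ← sum_div, sum_add_distrib, sq]
    _ ≤ (M + M) / (2 * c) := by gcongr <;> apply hrow
    _ = M / c := by field_simp; ring

end Matrix

theorem middle_part_entry_bound_general
    (n r : ℕ) (A : Matrix (Fin n) (Fin n) ℝ) (ε : ℝ)
    (hbound : ∀ i j, |A i j| ≤ 1)
    (hε : ε ∈ Set.Ioo (0 : ℝ) 1)
    (V : Matrix (Fin n) (Fin r) ℝ) (lam : Fin r → ℝ)
    (horth : Vᵀ * V = 1)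
    (heig : ∀ j : Fin r, A.mulVec (fun i => V i j) = fun i => lam j * V i j)
    (hlam : ∀ j : Fin r, ε * n ≤ |lam j|) :
    ∀ i j : Fin n, |(A - V * Matrix.diagonal lam * Vᵀ) i j| ≤ 1 + 1 / ε := by
  intro i j
  have hn : (0 : ℝ) < n := by exact_mod_cast i.pos
  have hrow : ∀ p, (V * diagonal lam) p ⬝ᵥ (V * diagonal lam) p ≤ n := fun p => by
    rw [← mul_eq_mul_diagonal_of_mulVec_col_eq heig, mul_apply_eq_vecMul]
    simpa using (vecMul_dotProduct_self_le_s3 horth (A p)).trans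
      (dotProduct_self_le_card (hbound p))
  have houtlier := abs_mul_diagonal_mul_transpose_apply_le (mul_pos hε.1 hn) hlam hrow i j
  calc |(A - V * diagonal lam * Vᵀ) i j|
      ≤ |A i j| + |(V * diagonal lam * Vᵀ) i j| := by rw [Matrix.sub_apply]; exact abs_sub _ _
    _ ≤ 1 + n / (ε * n) := add_le_add (hbound i j) houtlier
    _ = 1 + 1 / ε := by field_simp

/-- **Entrywise bound on the middle part `A_m = A - A_o`.**
If `A` is an `n × n` real symmetric matrix with entries bounded by `1` in magnitude,
and `V` has orthonormal columns which are eigenvectors of `A` for exactly the eigenvalues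
`lam j` with `|lam j| ≥ ε n` (so `A_o = V * diagonal lam * Vᵀ` is the projection of `A`
onto the outlying eigenspace, and `A_m = A - A_o` the projection onto the span of
eigenvectors with eigenvalue magnitude `< ε n`), then `‖A_m‖_∞ ≤ 1 + 1/ε`. -/
theorem middle_part_entry_bound
    (n r : ℕ) (A : Matrix (Fin n) (Fin n) ℝ) (ε : ℝ)
    (hA : A.IsHermitian)
    (hbound : ∀ i j, |A i j| ≤ 1)
    (hε : ε ∈ Set.Ioo (0 : ℝ) 1)
    (V : Matrix (Fin n) (Fin r) ℝ) (lam : Fin r → ℝ)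
    (horth : Vᵀ * V = 1)
    (heig : ∀ j : Fin r, A.mulVec (fun i => V i j) = fun i => lam j * V i j)
    (hlam : ∀ j : Fin r, ε * n ≤ |lam j|) :
    ∀ i j : Fin n, |(A - V * Matrix.diagonal lam * Vᵀ) i j| ≤ 1 + 1 / ε :=
  middle_part_entry_bound_general n r A ε hbound hε V lam horth heig hlam
end

section
/- Let A = BBᵀ be an n×n real PSD matrix with ‖A‖_∞ ≤ 1, where B ∈ ℝ^{n×r}. Let S̄ = √(n/s)·S where S is a random diagonal 0/1 matrix whose diagonal entries are independent Bernoulli(s/n). Then E[‖Bᵀ S̄ S̄ᵀ B − Bᵀ B‖_F²] ≤ n²/s. -/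
/-!
Since `S̄ S̄ᵀ = diag((n/s)·1[ωᵢ])`, entry `(k, l)` of the error is `∑ᵢ BᵢₖBᵢₗ (w(ωᵢ) - 1)`,
where `w` is the inverse-probability weight of a Bernoulli(`s/n`) coin, which has mean `1`.
The error entry is thus a centred sum of independent terms, with mean square
`Var w · ∑ᵢ (BᵢₖBᵢₗ)²` and `Var w = n/s - 1`. Summing over `k, l` gives
`(n/s - 1) ∑ᵢ Aᵢᵢ² ≤ (n/s - 1) n ≤ n²/s`.
-/

open Matrix Finset MeasureTheory

/-- The scaled diagonal sampling matrix `S̄ = √(n/s)·S` associated with a Bernoulli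
sample `ω : Fin n → Bool`. -/
noncomputable def sampleMatrix (n : ℕ) (s : ℝ) (ω : Fin n → Bool) :
    Matrix (Fin n) (Fin n) ℝ :=
  Matrix.diagonal (fun i => if ω i then Real.sqrt ((n : ℝ) / s) else 0)

open ProbabilityTheory
open scoped NNReal

theorem integral_sq_sum_mul_comp_eval_sub {ι Ω : Type*} [Fintype ι] [MeasurableSpace Ω]
    {ν : Measure Ω} [IsProbabilityMeasure ν] {w : Ω → ℝ} (hw : MemLp w 2 ν) (c : ι → ℝ) :
    ∫ ω, (∑ i, c i * w (ω i) - ∑ i, c i * ν[w]) ^ 2 ∂(Measure.pi fun _ ↦ ν)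
      = Var[w; ν] * ∑ i, c i ^ 2 := by
  have hX : ∀ i, MemLp (fun x ↦ c i * w x) 2 ν := fun i ↦ hw.const_mul (c i)
  have hmean : ∫ ω, ∑ i, c i * w (ω i) ∂(Measure.pi fun _ ↦ ν) = ∑ i, c i * ν[w] := by
    rw [integral_finsetSum _ fun i _ ↦
      integrable_comp_eval (μ := fun _ ↦ ν) (i := i) ((hX i).integrable one_le_two)]
    simp_rw [integral_const_mul, integral_comp_eval (μ := fun _ ↦ ν) hw.aestronglyMeasurable]
  have hvar := variance_sum_pi (μ := fun _ ↦ ν) hX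
  simp only [variance_const_mul, ← sum_mul] at hvar
  rw [mul_comm, ← hvar, variance_eq_integral, ← hmean]
  · simp only [Finset.sum_apply]
  · exact aemeasurable_sum _ fun i _ ↦
      ((hX i).comp_measurePreserving (measurePreserving_eval _ i)).aemeasurable

theorem integral_bernoulli_ite_zero {p : ℝ≥0} (hp : p ≤ 1) (a : ℝ) :
    ∫ b, (if b then a else 0) ∂(PMF.bernoulli p hp).toMeasure = p * a := by
  simp [PMF.integral_eq_sum, PMF.bernoulli_apply]

theorem variance_bernoulli_ite_zero {p : ℝ≥0} (hp : p ≤ 1) (a : ℝ) :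
    Var[fun b ↦ if b then a else 0; (PMF.bernoulli p hp).toMeasure] = p * (1 - p) * a ^ 2 := by
  rw [variance_eq_sub MemLp.of_discrete]
  simp only [Pi.pow_apply, ite_pow, zero_pow two_ne_zero, integral_bernoulli_ite_zero]
  ring

theorem sampleMatrix_mul_transpose {n : ℕ} {s : ℝ} (hs : 0 ≤ s) (ω : Fin n → Bool) :
    sampleMatrix n s ω * (sampleMatrix n s ω)ᵀ
      = diagonal fun i ↦ if ω i then (n : ℝ) / s else 0 := by
  rw [sampleMatrix, diagonal_transpose, diagonal_mul_diagonal]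
  congr! 2 with i
  split_ifs
  · exact Real.mul_self_sqrt (by positivity)
  · exact mul_zero 0

theorem Matrix.transpose_mul_diagonal_mul_apply {m n α : Type*} [Fintype m] [DecidableEq m]
    [CommSemiring α] (B : Matrix m n α) (d : m → α) (k l : n) :
    (Bᵀ * diagonal d * B) k l = ∑ i, B i k * B i l * d i := by
  rw [mul_apply]
  exact sum_congr rfl fun i _ ↦ by rw [mul_diagonal, transpose_apply]; ring

theorem Matrix.sum_sum_sum_mul_sq_eq_sum_diag_sq {m n α : Type*} [Fintype m] [Fintype n]
    [CommSemiring α] (B : Matrix m n α) :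
    ∑ k, ∑ l, ∑ i, (B i k * B i l) ^ 2 = ∑ i, ((B * Bᵀ) i i) ^ 2 := by
  symm
  calc ∑ i, ((B * Bᵀ) i i) ^ 2 = ∑ i, ∑ k, ∑ l, (B i k * B i l) ^ 2 := by
        simp only [mul_apply, transpose_apply, sq, sum_mul_sum]
        exact sum_congr rfl fun i _ ↦ sum_congr rfl fun k _ ↦
          sum_congr rfl fun l _ ↦ by ring
    _ = ∑ k, ∑ l, ∑ i, (B i k * B i l) ^ 2 := by
        rw [sum_comm]
        exact sum_congr rfl fun k _ ↦ sum_comm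

theorem transpose_mul_sampleMatrix_mul_sub_apply {n r : ℕ} {s : ℝ} (hs : 0 ≤ s)
    (B : Matrix (Fin n) (Fin r) ℝ) (ω : Fin n → Bool) (k l : Fin r) :
    (Bᵀ * sampleMatrix n s ω * (sampleMatrix n s ω)ᵀ * B - Bᵀ * B) k l
      = ∑ i, B i k * B i l * (if ω i then (n : ℝ) / s else 0) - ∑ i, B i k * B i l := by
  rw [Matrix.sub_apply, Matrix.mul_assoc Bᵀ, sampleMatrix_mul_transpose hs,
    transpose_mul_diagonal_mul_apply, mul_apply]
  simp only [transpose_apply]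

/-- **Approximate matrix multiplication bound.** Let `A = B * Bᵀ` be PSD with entries
bounded by `1` in magnitude. Sample each index independently with probability `s/n`,
giving the scaled sampling matrix `S̄`. Then
`E[‖Bᵀ S̄ S̄ᵀ B − Bᵀ B‖_F²] ≤ n²/s`. -/
theorem approx_matrix_mult_expectation
    (n r : ℕ) (s : ℝ) (B : Matrix (Fin n) (Fin r) ℝ)
    (hs : 0 < s) (hsn : s ≤ n)
    (hbound : ∀ i j, |(B * Bᵀ) i j| ≤ 1)
    (hp : ENNReal.ofReal (s / n) ≤ 1)
    (μ : Measure (Fin n → Bool))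
    (hμ : μ = Measure.pi (fun _ => (PMF.bernoulli (Real.toNNReal (s / n)) (ENNReal.coe_le_one_iff.mp hp)).toMeasure)) :
    (∫ ω, (∑ k : Fin r, ∑ l : Fin r,
        ((Bᵀ * sampleMatrix n s ω * (sampleMatrix n s ω)ᵀ * B - Bᵀ * B) k l) ^ 2) ∂μ)
      ≤ (n : ℝ) ^ 2 / s := by
  have hn : (0 : ℝ) < n := hs.trans_le hsn
  set p := Real.toNNReal (s / n)
  have hp_coe : (p : ℝ) = s / n := Real.coe_toNNReal _ (by positivity)
  set ν := (PMF.bernoulli p (ENNReal.coe_le_one_iff.mp hp)).toMeasure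
  have hw_mean : ∫ b, (if b then (n : ℝ) / s else 0) ∂ν = 1 := by
    rw [integral_bernoulli_ite_zero, hp_coe]
    field_simp
  have hw_var : Var[fun b ↦ if b then (n : ℝ) / s else 0; ν] = n / s - 1 := by
    rw [variance_bernoulli_ite_zero, hp_coe]
    field_simp
  have hterm : ∀ k l,
      ∫ ω, ((Bᵀ * sampleMatrix n s ω * (sampleMatrix n s ω)ᵀ * B - Bᵀ * B) k l) ^ 2
        ∂(Measure.pi fun _ ↦ ν) = (n / s - 1) * ∑ i, (B i k * B i l) ^ 2 := fun k l ↦ by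
    simpa only [transpose_mul_sampleMatrix_mul_sub_apply hs.le, hw_mean, hw_var, mul_one] using
      integral_sq_sum_mul_comp_eval_sub (ν := ν) (w := fun b ↦ if b then (n : ℝ) / s else 0)
        MemLp.of_discrete (fun i ↦ B i k * B i l)
  have hdiag : ∑ i, ((B * Bᵀ) i i) ^ 2 ≤ n := by
    simpa using sum_le_sum (s := univ) fun i _ ↦ (sq_le_one_iff_abs_le_one _).mpr (hbound i i)
  subst hμ
  rw [integral_finsetSum _ fun _ _ ↦ Integrable.of_finite]
  simp_rw [integral_finsetSum _ fun _ _ ↦ Integrable.of_finite, hterm, ← mul_sum,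
    sum_sum_sum_mul_sq_eq_sum_diag_sq]
  calc (n / s - 1) * ∑ i, ((B * Bᵀ) i i) ^ 2 ≤ (n / s - 1) * n :=
        mul_le_mul_of_nonneg_left hdiag (hw_var ▸ variance_nonneg _ _)
    _ ≤ (n : ℝ) ^ 2 / s := by
        rw [sub_mul, div_mul_eq_mul_div, ← sq]
        linarith
end

section
/- Let A ∈ ℝ^{n×n} be symmetric with ‖A‖_∞ ≤ 1 and let A' be obtained by zeroing out the diagonal and all entries A_{ij} with nnz(A_i)·nnz(A_j) < ε²·nnz(A)/(c·log²n) for a sufficiently large constant c, where nnz(A) ≥ 2/ε². Then for all i, |λ_i(A) − λ_i(A')| ≤ ε·√(nnz(A)). -/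
open Matrix Finset

/-- Number of nonzero entries in row `i` of `A`. -/
noncomputable def nnzRow {n : ℕ} (A : Matrix (Fin n) (Fin n) ℝ) (i : Fin n) : ℕ :=
  (Finset.univ.filter (fun j : Fin n => A i j ≠ 0)).card

/-- Total number of nonzero entries of `A`. -/
noncomputable def nnzTotal {n : ℕ} (A : Matrix (Fin n) (Fin n) ℝ) : ℕ :=
  ∑ i : Fin n, nnzRow A i

/-! With `T = ε²·nnz(A)/(c log² n)`, the matrix `A - A'` keeps the diagonal of `A` and exactly
the off-diagonal entries `A i j` with `nnz(A_i)·nnz(A_j) < T`. The Schur test with weights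
`√nnz(A_i)` bounds its quadratic form by `(1 + √T)‖x‖²`, and Weyl's inequality, proved by the
Courant–Fischer dimension count, turns this into the same bound on the difference of the sorted
eigenvalues. For `c = 64` and `n ≥ 2` one has `√T ≤ ε√nnz(A)/4`, and `ε²·nnz(A) ≥ 2` absorbs
the remaining `1`. -/

open scoped RealInnerProductSpace

namespace OrthonormalBasis

variable {ι 𝕜 E : Type*} [Fintype ι] [RCLike 𝕜] [NormedAddCommGroup E]
  [InnerProductSpace 𝕜 E] (b : OrthonormalBasis ι 𝕜 E)

theorem inner_eq_zero_of_mem_span_image {s : Set ι} {j : ι} (hj : j ∉ s) {x : E}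
    (hx : x ∈ Submodule.span 𝕜 (b '' s)) : inner 𝕜 (b j) x = 0 := by
  obtain ⟨l, hl, rfl⟩ := (Finsupp.mem_span_image_iff_linearCombination 𝕜).1 hx
  rw [← inner_conj_symm, b.orthonormal.inner_finsupp_eq_zero hj hl, map_zero]

theorem finrank_span_image (s : Finset ι) :
    Module.finrank 𝕜 (Submodule.span 𝕜 (b '' s)) = #s := by
  have hli : LinearIndependent 𝕜 fun k : (s : Set ι) => b k :=
    (b.orthonormal.comp _ Subtype.val_injective).linearIndependent
  rw [Set.image_eq_range, finrank_span_eq_card hli]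
  simp

end OrthonormalBasis

theorem two_mul_abs_mul_le_div_mul_sq_add {u v : ℝ} (hu : 0 < u) (hv : 0 < v) (x y : ℝ) :
    2 * (|x| * |y|) ≤ v / u * x ^ 2 + u / v * y ^ 2 := by
  rw [div_mul_eq_mul_div, div_mul_eq_mul_div, div_add_div _ _ hu.ne' hv.ne',
    le_div_iff₀ (by positivity), ← sq_abs x, ← sq_abs y]
  nlinarith [sq_nonneg (v * |x| - u * |y|), abs_nonneg x, abs_nonneg y]

namespace Matrix

section SchurTest

variable {ι : Type*} [Fintype ι]

theorem dotProduct_mulVec_self_eq_sum (N : Matrix ι ι ℝ) (x : ι → ℝ) :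
    x ⬝ᵥ N *ᵥ x = ∑ a, ∑ b, x a * (N a b * x b) := by
  simp [dotProduct, mulVec, mul_sum]

/-- The Schur test. -/
theorem abs_dotProduct_mulVec_le_of_sum_abs_mul_le {N : Matrix ι ι ℝ} (hN : N.IsSymm)
    {w : ι → ℝ} (hw : ∀ a b, N a b ≠ 0 → 0 < w a) {K : ℝ} (hK : 0 ≤ K)
    (hrow : ∀ a, ∑ b, |N a b| * w b ≤ K * w a) (x : ι → ℝ) :
    |x ⬝ᵥ N *ᵥ x| ≤ K * (x ⬝ᵥ x) := by
  set t : ι → ι → ℝ := fun a b => |N a b| * w b * (x a ^ 2 / w a)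
  have hterm (a b : ι) : |x a * (N a b * x b)| ≤ (t a b + t b a) / 2 := by
    by_cases hab : N a b = 0
    · simp [t, hab, hN.apply a b]
    have key := two_mul_abs_mul_le_div_mul_sq_add (hw a b hab) (hw b a (hN.apply a b ▸ hab))
      (x a) (x b)
    calc |x a * (N a b * x b)| = |N a b| * (2 * (|x a| * |x b|)) / 2 := by
          simp only [abs_mul]; ring
      _ ≤ |N a b| * (w b / w a * x a ^ 2 + w a / w b * x b ^ 2) / 2 := by gcongr
      _ = (t a b + t b a) / 2 := by simp only [t, hN.apply a b]; ring
  have hrow' (a : ι) : ∑ b, t a b ≤ K * x a ^ 2 := by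
    by_cases hzero : ∀ b, N a b = 0
    · simp only [t, hzero, abs_zero, zero_mul, sum_const_zero]
      positivity
    push Not at hzero
    obtain ⟨b, hb⟩ := hzero
    have hwa := hw a b hb
    calc ∑ b, t a b = (∑ b, |N a b| * w b) * (x a ^ 2 / w a) := by rw [sum_mul]
      _ ≤ K * w a * (x a ^ 2 / w a) := by gcongr; exact hrow a
      _ = K * x a ^ 2 := by field_simp
  calc |x ⬝ᵥ N *ᵥ x| ≤ ∑ a, ∑ b, |x a * (N a b * x b)| := by
        rw [dotProduct_mulVec_self_eq_sum]
        exact (abs_sum_le_sum_abs _ _).trans (sum_le_sum fun a _ => abs_sum_le_sum_abs _ _)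
    _ ≤ ∑ a, ∑ b, (t a b + t b a) / 2 := by gcongr with a _ b _; exact hterm a b
    _ = ∑ a, ∑ b, t a b := by
        simp only [← sum_div, sum_add_distrib]
        rw [sum_comm (f := fun a b => t b a)]
        ring
    _ ≤ ∑ a, K * x a ^ 2 := sum_le_sum fun a _ => hrow' a
    _ = K * (x ⬝ᵥ x) := by simp [dotProduct, mul_sum, sq]

variable [DecidableEq ι]

theorem abs_dotProduct_mulVec_le_of_sparse {N : Matrix ι ι ℝ} (hN : N.IsSymm)
    (hN1 : ∀ a b, |N a b| ≤ 1) {d : ι → ℕ} (hd : ∀ a, #{b | N a b ≠ 0} ≤ d a)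
    {T : ℝ} (hT : ∀ a b, a ≠ b → N a b ≠ 0 → (d a : ℝ) * d b ≤ T) (x : ι → ℝ) :
    |x ⬝ᵥ N *ᵥ x| ≤ (1 + √T) * (x ⬝ᵥ x) := by
  have hd_pos {a b : ι} (hab : N a b ≠ 0) : (0 : ℝ) < d a := by
    have : 0 < #{b | N a b ≠ 0} := card_pos.2 ⟨b, by simpa using hab⟩
    exact_mod_cast this.trans_le (hd a)
  refine abs_dotProduct_mulVec_le_of_sum_abs_mul_le hN (w := fun a => √(d a)) (K := 1 + √T)
    (fun a b hab => Real.sqrt_pos.2 (hd_pos hab)) (by positivity) (fun a => ?_) x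
  have hterm (b : ι) : |N a b| * √(d b) ≤
      (if b = a then √(d a) else 0) + (if N a b ≠ 0 then √T / √(d a) else 0) := by
    by_cases hab : N a b = 0
    · rw [hab, abs_zero, zero_mul]
      split_ifs <;> positivity
    rw [if_pos hab]
    by_cases hba : b = a
    · subst hba
      rw [if_pos rfl]
      exact le_add_of_le_of_nonneg (mul_le_of_le_one_left (Real.sqrt_nonneg _) (hN1 b b))
        (by positivity)
    rw [if_neg hba, zero_add, le_div_iff₀ (Real.sqrt_pos.2 (hd_pos hab)), mul_assoc,
      ← Real.sqrt_mul' _ (Nat.cast_nonneg _), mul_comm (d b : ℝ)]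
    calc |N a b| * √(d a * d b) ≤ 1 * √T := by
          gcongr
          · exact hN1 a b
          · exact hT a b (Ne.symm hba) hab
      _ = √T := one_mul _
  calc ∑ b, |N a b| * √(d b)
      ≤ ∑ b, ((if b = a then √(d a) else 0) + (if N a b ≠ 0 then √T / √(d a) else 0)) :=
        sum_le_sum fun b _ => hterm b
    _ = √(d a) + #{b | N a b ≠ 0} * (√T / √(d a)) := by
        rw [sum_add_distrib, sum_ite_eq', if_pos (mem_univ a), ← sum_filter, sum_const,
          nsmul_eq_mul]
    _ ≤ √(d a) + d a * (√T / √(d a)) := by gcongr; exact_mod_cast hd a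
    _ = (1 + √T) * √(d a) := by
        rw [mul_div_left_comm, Real.div_sqrt]
        ring

end SchurTest

theorem inner_toEuclideanLin_eq_dotProduct_mulVec {ι : Type*} [Fintype ι] [DecidableEq ι]
    (M : Matrix ι ι ℝ) (x : EuclideanSpace ℝ ι) :
    ⟪x, toEuclideanLin M x⟫ = x.ofLp ⬝ᵥ M *ᵥ x.ofLp := by
  simp [EuclideanSpace.inner_eq_star_dotProduct, dotProduct_comm]

namespace IsHermitian

section Rayleigh

variable {ι : Type*} [Fintype ι] [DecidableEq ι] {A : Matrix ι ι ℝ} (hA : A.IsHermitian)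

theorem toEuclideanLin_eigenvectorBasis (j : ι) :
    toEuclideanLin A (hA.eigenvectorBasis j) = hA.eigenvalues j • hA.eigenvectorBasis j := by
  simp [toLpLin_apply, hA.mulVec_eigenvectorBasis]

theorem inner_toEuclideanLin_self (x : EuclideanSpace ℝ ι) :
    ⟪x, toEuclideanLin A x⟫ = ∑ j, hA.eigenvalues j * ⟪hA.eigenvectorBasis j, x⟫ ^ 2 := by
  rw [← hA.eigenvectorBasis.sum_inner_mul_inner]
  refine sum_congr rfl fun j _ => ?_
  rw [← isSymmetric_toEuclideanLin_iff.2 hA, hA.toEuclideanLin_eigenvectorBasis,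
    real_inner_smul_left, real_inner_comm x]
  ring

theorem mul_norm_sq_le_inner_of_mem_span {s : Set ι} {μ : ℝ}
    (hμ : ∀ j ∈ s, μ ≤ hA.eigenvalues j)
    {x : EuclideanSpace ℝ ι} (hx : x ∈ Submodule.span ℝ (hA.eigenvectorBasis '' s)) :
    μ * ‖x‖ ^ 2 ≤ ⟪x, toEuclideanLin A x⟫ := by
  rw [hA.inner_toEuclideanLin_self, ← hA.eigenvectorBasis.sum_sq_inner_right, mul_sum]
  refine sum_le_sum fun j _ => ?_
  by_cases hj : j ∈ s
  · exact mul_le_mul_of_nonneg_right (hμ j hj) (sq_nonneg _)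
  · simp [hA.eigenvectorBasis.inner_eq_zero_of_mem_span_image hj hx]

theorem inner_le_mul_norm_sq_of_mem_span {s : Set ι} {μ : ℝ}
    (hμ : ∀ j ∈ s, hA.eigenvalues j ≤ μ)
    {x : EuclideanSpace ℝ ι} (hx : x ∈ Submodule.span ℝ (hA.eigenvectorBasis '' s)) :
    ⟪x, toEuclideanLin A x⟫ ≤ μ * ‖x‖ ^ 2 := by
  rw [hA.inner_toEuclideanLin_self, ← hA.eigenvectorBasis.sum_sq_inner_right, mul_sum]
  refine sum_le_sum fun j _ => ?_
  by_cases hj : j ∈ s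
  · exact mul_le_mul_of_nonneg_right (hμ j hj) (sq_nonneg _)
  · simp [hA.eigenvectorBasis.inner_eq_zero_of_mem_span_image hj hx]

end Rayleigh

section Weyl

variable {n : ℕ} {A B : Matrix (Fin n) (Fin n) ℝ} (hA : A.IsHermitian) (hB : B.IsHermitian)
  {σ τ : Equiv.Perm (Fin n)}

theorem eigenvalues_le_add_of_inner_sub_le (hσ : Antitone fun i => hA.eigenvalues (σ i))
    (hτ : Antitone fun i => hB.eigenvalues (τ i)) {C : ℝ}
    (hC : ∀ x : EuclideanSpace ℝ (Fin n), ⟪x, toEuclideanLin (A - B) x⟫ ≤ C * ‖x‖ ^ 2)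
    (i : Fin n) : hA.eigenvalues (σ i) ≤ hB.eigenvalues (τ i) + C := by
  set U := Submodule.span ℝ (hA.eigenvectorBasis '' ((Iic i).image σ : Finset (Fin n)))
  set W := Submodule.span ℝ (hB.eigenvectorBasis '' ((Ici i).image τ : Finset (Fin n)))
  -- `U` and `W` have dimensions `i + 1` and `n - i`, so they meet nontrivially.
  obtain ⟨x, hxU, hxW, hx0⟩ : ∃ x ∈ U, x ∈ W ∧ x ≠ 0 := by
    by_contra! h
    have hdim := Submodule.finrank_add_finrank_le_of_disjoint (Submodule.disjoint_def.2 h)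
    simp only [U, W, OrthonormalBasis.finrank_span_image, card_image_of_injective _ σ.injective,
      card_image_of_injective _ τ.injective, Fin.card_Iic, Fin.card_Ici, finrank_euclideanSpace,
      Fintype.card_fin] at hdim
    omega
  have hAx : hA.eigenvalues (σ i) * ‖x‖ ^ 2 ≤ ⟪x, toEuclideanLin A x⟫ := by
    refine hA.mul_norm_sq_le_inner_of_mem_span (fun j hj => ?_) hxU
    obtain ⟨k, hk, rfl⟩ := mem_image.1 (mem_coe.1 hj)
    exact hσ (mem_Iic.1 hk)
  have hBx : ⟪x, toEuclideanLin B x⟫ ≤ hB.eigenvalues (τ i) * ‖x‖ ^ 2 := by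
    refine hB.inner_le_mul_norm_sq_of_mem_span (fun j hj => ?_) hxW
    obtain ⟨k, hk, rfl⟩ := mem_image.1 (mem_coe.1 hj)
    exact hτ (mem_Ici.1 hk)
  have hABx := hC x
  rw [map_sub, LinearMap.sub_apply, inner_sub_right] at hABx
  refine le_of_mul_le_mul_right ?_ (by positivity : 0 < ‖x‖ ^ 2)
  linarith

theorem abs_eigenvalues_sub_le_of_abs_dotProduct_mulVec_le
    (hσ : Antitone fun i => hA.eigenvalues (σ i)) (hτ : Antitone fun i => hB.eigenvalues (τ i))
    {C : ℝ} (hC : ∀ x : Fin n → ℝ, |x ⬝ᵥ (A - B) *ᵥ x| ≤ C * (x ⬝ᵥ x)) (i : Fin n) :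
    |hA.eigenvalues (σ i) - hB.eigenvalues (τ i)| ≤ C := by
  have hC' (x : EuclideanSpace ℝ (Fin n)) :
      |⟪x, toEuclideanLin (A - B) x⟫| ≤ C * ‖x‖ ^ 2 := by
    rw [inner_toEuclideanLin_eq_dotProduct_mulVec, ← real_inner_self_eq_norm_sq,
      EuclideanSpace.inner_eq_star_dotProduct, star_trivial]
    exact hC x.ofLp
  have hAB := hA.eigenvalues_le_add_of_inner_sub_le hB hσ hτ
    (fun x => (le_abs_self _).trans (hC' x)) i
  have hBA := hB.eigenvalues_le_add_of_inner_sub_le hA hτ hσ (C := C) (fun x => by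
    rw [← neg_sub, map_neg, LinearMap.neg_apply, inner_neg_right]
    exact (neg_le_abs _).trans (hC' x)) i
  exact abs_sub_le_iff.2 ⟨by linarith, by linarith⟩

end Weyl

end IsHermitian

end Matrix

theorem one_add_sqrt_div_log_sq_le {ε m : ℝ} (hε : 0 < ε) (hm : 2 / ε ^ 2 ≤ m) (n : ℕ) :
    1 + √(ε ^ 2 * m / (64 * Real.log n ^ 2)) ≤ ε * √m := by
  have hεm : 2 ≤ ε ^ 2 * m := by rwa [div_le_iff₀' (by positivity)] at hm
  have hs : (ε * √m) ^ 2 = ε ^ 2 * m := by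
    rw [mul_pow, Real.sq_sqrt (by nlinarith [sq_nonneg ε])]
  have hlog : ε ^ 2 * m / (64 * Real.log n ^ 2) ≤ ε ^ 2 * m / 16 := by
    rcases lt_or_ge n 2 with hn | hn
    -- for `n ≤ 1`, `log n = 0` and the quotient is `0` by the convention `x / 0 = 0`
    · interval_cases n <;> simp <;> positivity
    · have : Real.log 2 ≤ Real.log n := Real.log_le_log (by norm_num) (by exact_mod_cast hn)
      have : 1 / 2 < Real.log n := by linarith [Real.log_two_gt_d9]
      gcongr
      nlinarith
  have hsqrt : √(ε ^ 2 * m / (64 * Real.log n ^ 2)) ≤ ε * √m / 4 := by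
    rw [Real.sqrt_le_iff]
    refine ⟨by positivity, ?_⟩
    rw [div_pow, hs]
    linarith
  nlinarith [Real.sqrt_nonneg m, mul_nonneg hε.le (Real.sqrt_nonneg m)]

/-- **Zeroing out entries in sparse rows/columns barely perturbs the spectrum.**
There is a sufficiently large constant `c` such that for any symmetric `A ∈ ℝ^{n×n}`
with `‖A‖_∞ ≤ 1` and `nnz(A) ≥ 2/ε²`, if `A'` is obtained from `A` by zeroing the
diagonal and all entries `A i j` with `nnz(A_i)·nnz(A_j) < ε² nnz(A)/(c log² n)`,
then `|λ_i(A) − λ_i(A')| ≤ ε √(nnz(A))` for all `i` (eigenvalues sorted decreasingly). -/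
theorem zeroing_perturbation_bound :
    ∃ c : ℝ, 0 < c ∧
      ∀ (n : ℕ) (A A' : Matrix (Fin n) (Fin n) ℝ) (ε : ℝ)
        (hA : A.IsHermitian) (hA' : A'.IsHermitian),
        (∀ i j, |A i j| ≤ 1) →
        ε ∈ Set.Ioo (0 : ℝ) 1 →
        2 / ε ^ 2 ≤ (nnzTotal A : ℝ) →
        (∀ i j : Fin n, (i = j ∨
            ((nnzRow A i : ℝ) * (nnzRow A j : ℝ) <
              ε ^ 2 * (nnzTotal A : ℝ) / (c * (Real.log n) ^ 2))) → A' i j = 0) →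
        (∀ i j : Fin n, ¬(i = j ∨
            ((nnzRow A i : ℝ) * (nnzRow A j : ℝ) <
              ε ^ 2 * (nnzTotal A : ℝ) / (c * (Real.log n) ^ 2))) → A' i j = A i j) →
        ∀ (σ τ : Equiv.Perm (Fin n)),
          Antitone (fun i => hA.eigenvalues (σ i)) →
          Antitone (fun i => hA'.eigenvalues (τ i)) →
          ∀ i : Fin n,
            |hA.eigenvalues (σ i) - hA'.eigenvalues (τ i)|
              ≤ ε * Real.sqrt (nnzTotal A) := by
  refine ⟨64, by norm_num, ?_⟩
  intro n A A' ε hA hA' hA1 hε hm hzero hkeep σ τ hσ hτ i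
  set T := ε ^ 2 * (nnzTotal A : ℝ) / (64 * Real.log n ^ 2)
  have hdiff (a b : Fin n) :
      (A - A') a b = if a = b ∨ (nnzRow A a : ℝ) * nnzRow A b < T then A a b else 0 := by
    split_ifs with h
    · simp [hzero a b h]
    · simp [hkeep a b h]
  have hquad (x : Fin n → ℝ) : |x ⬝ᵥ (A - A') *ᵥ x| ≤ (1 + √T) * (x ⬝ᵥ x) := by
    refine abs_dotProduct_mulVec_le_of_sparse (isHermitian_iff_isSymm.1 (hA.sub hA'))
      (d := nnzRow A) (fun a b => ?_) (fun a => card_le_card fun b => ?_)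
      (fun a b hab hM => ?_) x
    · rw [hdiff]
      split_ifs
      exacts [hA1 a b, by simp]
    · simp only [mem_filter, mem_univ, true_and, hdiff]
      split_ifs <;> simp
    · rw [hdiff] at hM
      split_ifs at hM with h
      exacts [(h.resolve_left hab).le, absurd rfl hM]
  exact (hA.abs_eigenvalues_sub_le_of_abs_dotProduct_mulVec_le hA' hσ hτ hquad i).trans
    (one_add_sqrt_div_log_sq_le hε.1 hm n)
end

section
/- Let A ∈ ℝ^{n×n} be symmetric and let A'_o = V'_o Λ'_o V'_oᵀ collect eigenvalues of A' (a matrix with ‖A'_i‖₂ ≤ ‖A_i‖₂ for each row) of magnitude at least ε√δ‖A‖_F. Then for all i,j, the entries satisfy |(A'_o)_{ij}| ≤ ‖A_i‖₂·‖A_j‖₂ / (ε√δ‖A‖_F). -/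
open Matrix Finset

/-- The Frobenius norm of a real matrix. -/
noncomputable def frobNorm {n : ℕ} (A : Matrix (Fin n) (Fin n) ℝ) : ℝ :=
  Real.sqrt (∑ i : Fin n, ∑ j : Fin n, (A i j) ^ 2)

/-- The Euclidean norm of row `i` of `A`. -/
noncomputable def rowNorm {n : ℕ} (A : Matrix (Fin n) (Fin n) ℝ) (i : Fin n) : ℝ :=
  Real.sqrt (∑ j : Fin n, (A i j) ^ 2)

/-- Bessel's inequality for a matrix with orthonormal columns. -/
lemma bessel_aux {n r : ℕ} (V : Matrix (Fin n) (Fin r) ℝ) (horth : Vᵀ * V = 1)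
    (a : Fin n → ℝ) :
    ∑ k : Fin r, (∑ j : Fin n, a j * V j k) ^ 2 ≤ ∑ j : Fin n, (a j) ^ 2 := by
  set c : Fin r → ℝ := fun k => ∑ j : Fin n, a j * V j k with hc
  have key : ∀ k k' : Fin r, ∑ j : Fin n, V j k * V j k' = if k = k' then 1 else 0 := by
    intro k k'
    have := congrFun (congrFun horth k) k'
    simpa [Matrix.mul_apply, Matrix.one_apply] using this
  have h0 : (0:ℝ) ≤ ∑ j : Fin n, (a j - ∑ k : Fin r, c k * V j k) ^ 2 :=
    Finset.sum_nonneg fun _ _ => sq_nonneg _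
  have hab : ∑ j : Fin n, a j * (∑ k : Fin r, c k * V j k) = ∑ k : Fin r, (c k)^2 := by
    calc ∑ j : Fin n, a j * (∑ k : Fin r, c k * V j k)
        = ∑ j : Fin n, ∑ k : Fin r, c k * (a j * V j k) := by
          apply Finset.sum_congr rfl; intro j _; rw [Finset.mul_sum]; apply Finset.sum_congr rfl
          intro k _; ring
      _ = ∑ k : Fin r, c k * ∑ j : Fin n, a j * V j k := by
          rw [Finset.sum_comm]; simp [Finset.mul_sum]
      _ = ∑ k : Fin r, (c k)^2 := by apply Finset.sum_congr rfl; intro k _; simp only [hc]; ring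
  have hVc : ∀ k0 : Fin r, ∑ j : Fin n, (∑ k : Fin r, c k * V j k) * V j k0 = c k0 := by
    intro k0
    calc ∑ j : Fin n, (∑ k : Fin r, c k * V j k) * V j k0
        = ∑ j : Fin n, ∑ k : Fin r, c k * (V j k * V j k0) := by
          apply Finset.sum_congr rfl; intro j _; rw [Finset.sum_mul]
          apply Finset.sum_congr rfl; intro k _; ring
      _ = ∑ k : Fin r, c k * ∑ j : Fin n, V j k * V j k0 := by
          rw [Finset.sum_comm]; apply Finset.sum_congr rfl; intro k _; rw [Finset.mul_sum]
      _ = c k0 := by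
          rw [Finset.sum_eq_single k0]
          · rw [key k0 k0]; simp
          · intro k _ hk; rw [key k k0]; simp [hk]
          · simp
  have hbb : ∑ j : Fin n, (∑ k : Fin r, c k * V j k) ^ 2 = ∑ k : Fin r, (c k)^2 := by
    calc ∑ j : Fin n, (∑ k : Fin r, c k * V j k) ^ 2
        = ∑ j : Fin n, ∑ k : Fin r, c k * ((∑ k' : Fin r, c k' * V j k') * V j k) := by
          apply Finset.sum_congr rfl; intro j _; rw [sq, Finset.mul_sum]
          apply Finset.sum_congr rfl; intro k _; ring
      _ = ∑ k : Fin r, c k * ∑ j : Fin n, (∑ k' : Fin r, c k' * V j k') * V j k := by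
          rw [Finset.sum_comm]; apply Finset.sum_congr rfl; intro k _; rw [Finset.mul_sum]
      _ = ∑ k : Fin r, (c k)^2 := by
          apply Finset.sum_congr rfl; intro k _; rw [hVc k]; ring
  have hexp : ∑ j : Fin n, (a j - ∑ k : Fin r, c k * V j k) ^ 2
      = ∑ j : Fin n, (a j)^2 - ∑ k : Fin r, (c k)^2 := by
    have : ∀ j : Fin n, (a j - ∑ k : Fin r, c k * V j k) ^ 2
        = (a j)^2 - 2 * (a j * (∑ k : Fin r, c k * V j k))
          + (∑ k : Fin r, c k * V j k)^2 := by intro j; ring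
    rw [Finset.sum_congr rfl fun j _ => this j]
    rw [Finset.sum_add_distrib, Finset.sum_sub_distrib, ← Finset.mul_sum, hab, hbb]
    ring
  rw [hexp] at h0
  linarith

/-- **Entrywise bound on the outlying part under row-norm sampling.** Let `A` be symmetric
and `A'` a matrix whose rows are ℓ₂-dominated by those of `A`. Let
`A'_o = V (diagonal lam) Vᵀ` collect the eigenvalues of `A'` of magnitude at least
`ε √δ ‖A‖_F` (with `V` the corresponding orthonormal eigenvectors). Then for all `i, j`,
`|(A'_o)_{ij}| ≤ ‖A_i‖₂ ‖A_j‖₂ / (ε √δ ‖A‖_F)`. -/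
theorem rownorm_outlying_entry_bound
    (n r : ℕ) (A A' : Matrix (Fin n) (Fin n) ℝ) (ε δ : ℝ)
    (hA : A.IsHermitian)
    (hε : ε ∈ Set.Ioo (0 : ℝ) 1) (hδ : δ ∈ Set.Ioo (0 : ℝ) 1)
    (hdom : ∀ i, ∑ j : Fin n, (A' i j) ^ 2 ≤ ∑ j : Fin n, (A i j) ^ 2)
    (V : Matrix (Fin n) (Fin r) ℝ) (lam : Fin r → ℝ)
    (horth : Vᵀ * V = 1)
    (heig : ∀ j : Fin r, A'.mulVec (fun i => V i j) = fun i => lam j * V i j)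
    (hlam : ∀ j : Fin r, ε * Real.sqrt δ * frobNorm A ≤ |lam j|) :
    ∀ i j : Fin n,
      |(V * Matrix.diagonal lam * Vᵀ) i j|
        ≤ rowNorm A i * rowNorm A j / (ε * Real.sqrt δ * frobNorm A) := by
  intro i j
  set τ : ℝ := ε * Real.sqrt δ * frobNorm A with hτ
  -- eigenvector relation pointwise
  have heig' : ∀ (k : Fin r) (i : Fin n), lam k * V i k = ∑ j : Fin n, A' i j * V j k := by
    intro k i
    have := congrFun (heig k) i
    simpa [Matrix.mulVec, dotProduct] using this.symm
  -- key bound: ∑_k (lam k * V i k)^2 ≤ ‖A'_i‖² ≤ ‖A_i‖² = rowNorm A i ^ 2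
  have hkey : ∀ i : Fin n, ∑ k : Fin r, (lam k * V i k)^2 ≤ (rowNorm A i)^2 := by
    intro i
    have h1 : ∑ k : Fin r, (lam k * V i k)^2 ≤ ∑ j : Fin n, (A' i j)^2 := by
      have := bessel_aux V horth (A' i)
      calc ∑ k : Fin r, (lam k * V i k)^2
          = ∑ k : Fin r, (∑ j : Fin n, A' i j * V j k)^2 := by
            apply Finset.sum_congr rfl; intro k _; rw [heig' k i]
        _ ≤ ∑ j : Fin n, (A' i j)^2 := this
    have h2 : (rowNorm A i)^2 = ∑ j : Fin n, (A i j)^2 := by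
      rw [rowNorm, Real.sq_sqrt (Finset.sum_nonneg fun _ _ => sq_nonneg _)]
    rw [h2]
    exact h1.trans (hdom i)
  have hrnonneg : ∀ i, 0 ≤ rowNorm A i := fun i => Real.sqrt_nonneg _
  have hτnonneg : 0 ≤ τ := by
    rw [hτ]
    exact mul_nonneg (mul_nonneg hε.1.le (Real.sqrt_nonneg _)) (Real.sqrt_nonneg _)
  -- entry formula
  have hentry : (V * Matrix.diagonal lam * Vᵀ) i j
      = ∑ k : Fin r, V i k * (lam k * V j k) := by
    have hd : ∀ x : Fin r, (V * Matrix.diagonal lam) i x = V i x * lam x := fun x =>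
      Matrix.mul_diagonal ..
    rw [Matrix.mul_apply]
    simp_rw [hd, Matrix.transpose_apply, mul_assoc]
  by_cases hτ0 : τ = 0
  · -- degenerate case: A = 0 forces lam = 0 (or V column relation); entry = 0
    have hF : frobNorm A = 0 := by
      rcases mul_eq_zero.mp hτ0 with h | h
      · rcases mul_eq_zero.mp h with h' | h'
        · exact absurd h' (ne_of_gt hε.1)
        · exact absurd h' (ne_of_gt (Real.sqrt_pos.mpr hδ.1))
      · exact h
    have hsum0 : ∑ i : Fin n, ∑ j : Fin n, (A i j)^2 = 0 := by
      have hnn : 0 ≤ ∑ i : Fin n, ∑ j : Fin n, (A i j)^2 :=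
        Finset.sum_nonneg fun _ _ => Finset.sum_nonneg fun _ _ => sq_nonneg _
      have := Real.sqrt_eq_zero hnn |>.mp hF
      exact this
    have hrow0 : ∀ i : Fin n, ∑ j : Fin n, (A i j)^2 = 0 := by
      intro i
      have := (Finset.sum_eq_zero_iff_of_nonneg
        (fun i _ => Finset.sum_nonneg fun _ _ => sq_nonneg (A i _))).mp hsum0 i (Finset.mem_univ i)
      exact this
    have hrn0 : ∀ i : Fin n, rowNorm A i = 0 := by
      intro i; rw [rowNorm, hrow0 i, Real.sqrt_zero]
    have hA'0 : ∀ i j : Fin n, A' i j = 0 := by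
      intro i j
      have h1 : ∑ j : Fin n, (A' i j)^2 ≤ 0 := (hdom i).trans_eq (hrow0 i)
      have h2 : ∑ j : Fin n, (A' i j)^2 = 0 :=
        le_antisymm h1 (Finset.sum_nonneg fun _ _ => sq_nonneg _)
      have := (Finset.sum_eq_zero_iff_of_nonneg (fun _ _ => sq_nonneg _)).mp h2 j
        (Finset.mem_univ j)
      exact sq_eq_zero_iff.mp this
    have hlamV : ∀ (k : Fin r) (i : Fin n), lam k * V i k = 0 := by
      intro k i
      rw [heig' k i]
      apply Finset.sum_eq_zero
      intro j _; rw [hA'0 i j, zero_mul]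
    have : (V * Matrix.diagonal lam * Vᵀ) i j = 0 := by
      rw [hentry]
      apply Finset.sum_eq_zero
      intro k _; rw [hlamV k j, mul_zero]
    rw [this, abs_zero, hrn0 i, zero_mul, zero_div]
  · have hτpos : 0 < τ := lt_of_le_of_ne hτnonneg (Ne.symm hτ0)
    -- bound on ∑ V i k ^ 2
    have hVi : ∑ k : Fin r, (V i k)^2 ≤ (rowNorm A i / τ)^2 := by
      have : τ^2 * ∑ k : Fin r, (V i k)^2 ≤ ∑ k : Fin r, (lam k * V i k)^2 := by
        rw [Finset.mul_sum]
        apply Finset.sum_le_sum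
        intro k _
        have h1 : τ ≤ |lam k| := hlam k
        have : τ^2 ≤ (lam k)^2 := by
          rw [← sq_abs (lam k)]
          exact pow_le_pow_left₀ hτnonneg h1 2
        calc τ^2 * (V i k)^2 ≤ (lam k)^2 * (V i k)^2 :=
              mul_le_mul_of_nonneg_right this (sq_nonneg _)
          _ = (lam k * V i k)^2 := by ring
      have h2 := this.trans (hkey i)
      rw [div_pow]
      rw [le_div_iff₀ (by positivity)]
      linarith [h2]
    -- Cauchy–Schwarz
    have hcs := Finset.sum_mul_sq_le_sq_mul_sq Finset.univ
      (fun k => V i k) (fun k => lam k * V j k)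
    have habs : |(V * Matrix.diagonal lam * Vᵀ) i j|^2
        ≤ (rowNorm A i / τ)^2 * (rowNorm A j)^2 := by
      rw [hentry, sq_abs]
      calc (∑ k : Fin r, V i k * (lam k * V j k))^2
          ≤ (∑ k : Fin r, (V i k)^2) * (∑ k : Fin r, (lam k * V j k)^2) := hcs
        _ ≤ (rowNorm A i / τ)^2 * (rowNorm A j)^2 := by
            apply mul_le_mul hVi (hkey j) (Finset.sum_nonneg fun _ _ => sq_nonneg _)
              (sq_nonneg _)
    have hrhs : rowNorm A i * rowNorm A j / τ = (rowNorm A i / τ) * rowNorm A j := by ring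
    rw [hrhs]
    have h1 : |(V * Matrix.diagonal lam * Vᵀ) i j|^2 ≤ ((rowNorm A i / τ) * rowNorm A j)^2 := by
      rw [mul_pow]; exact habs
    have hy : 0 ≤ (rowNorm A i / τ) * rowNorm A j :=
      mul_nonneg (div_nonneg (hrnonneg i) hτpos.le) (hrnonneg j)
    nlinarith [abs_nonneg ((V * Matrix.diagonal lam * Vᵀ) i j)]
end
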